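/- arXiv:1703.01890 — 5 statements merged into one kernel-verified Lean document; each statement's English description precedes it below -/
import Mathlib

section
/- Let R be a reduced Noetherian commutative ring which is a ℚ-algebra, and let ξ : R → R be a derivation. Then every minimal prime ideal 𝔭 of R satisfies ξ(𝔭) ⊆ 𝔭. -/
/-!
Localized at a minimal prime `p`, a reduced ring becomes a field, so every `x ∈ p` is killed by
some `y ∉ p`. Applying `ξ` to `x * y = 0` gives `y * ξ x = -(x * ξ y) ∈ p`, and primality
yields `ξ x ∈ p`.
-/

theorem Ideal.exists_notMem_mul_eq_zero_of_mem_minimalPrimes {R : Type*} [CommRing R]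
    [IsReduced R] {p : Ideal R} (hp : p ∈ minimalPrimes R) {x : R} (hx : x ∈ p) :
    ∃ y ∉ p, x * y = 0 := by
  have : p.IsPrime := hp.1.1
  have : Ring.KrullDimLE 0 (Localization.AtPrime p) := .of_isLocalization _ hp _
  let : Field (Localization.AtPrime p) := Ring.KrullDimLE.isField_of_isReduced.toField
  have hx_zero : algebraMap R (Localization.AtPrime p) x = 0 := by
    rw [← Ideal.mem_bot, ← IsLocalRing.maximalIdeal_eq_bot,
      ← Localization.AtPrime.map_eq_maximalIdeal]
    exact Ideal.mem_map_of_mem _ hx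
  obtain ⟨⟨y, hy⟩, hyx⟩ := (IsLocalization.map_eq_zero_iff p.primeCompl _ x).mp hx_zero
  exact ⟨y, hy, (mul_comm x y).trans hyx⟩

theorem Derivation.mem_of_mul_eq_zero {A R : Type*} [CommSemiring A] [CommRing R] [Algebra A R]
    (D : Derivation A R R) {p : Ideal R} [p.IsPrime] {x y : R} (hx : x ∈ p) (hy : y ∉ p)
    (hxy : x * y = 0) : D x ∈ p := by
  have hD : y * D x = -(x * D y) := by
    have := D.leibniz x y
    rw [hxy, map_zero, smul_eq_mul, smul_eq_mul] at this
    linear_combination -this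
  have : y * D x ∈ p := hD ▸ neg_mem (p.mul_mem_right _ hx)
  exact (‹p.IsPrime›.mem_or_mem this).resolve_left hy

theorem derivation_preserves_minimal_prime_general {R : Type*} [CommRing R]
    [IsReduced R] [Algebra ℚ R] (ξ : Derivation ℚ R R) (p : Ideal R)
    (hp : p ∈ minimalPrimes R) :
    ∀ x ∈ p, ξ x ∈ p := by
  intro x hx
  have : p.IsPrime := hp.1.1
  obtain ⟨y, hy, hxy⟩ := Ideal.exists_notMem_mul_eq_zero_of_mem_minimalPrimes hp hx
  exact ξ.mem_of_mul_eq_zero hx hy hxy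

/-- Every minimal prime of a reduced Noetherian commutative ℚ-algebra is
invariant under any derivation. -/
theorem derivation_preserves_minimal_prime {R : Type*} [CommRing R] [IsNoetherianRing R]
    [IsReduced R] [Algebra ℚ R] (ξ : Derivation ℚ R R) (p : Ideal R)
    (hp : p ∈ minimalPrimes R) :
    ∀ x ∈ p, ξ x ∈ p :=
  derivation_preserves_minimal_prime_general ξ p hp
end

section
/- Let R be a commutative ring, ξ a derivation of R, and suppose f ∈ R satisfies fⁿ = 0 for some n ≥ 1. Assume R is a ℚ-algebra. Then there exist natural numbers q such that (ξ f)^q · f^e = 0 with e = 0; that is, ξ f is nilpotent. -/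
/-!
If `f ^ (m + 1) * (D f) ^ j = 0`, applying `D` and discarding the term that still contains
`f ^ (m + 1) * (D f) ^ j` gives `(m + 1) • f ^ m * (D f) ^ (j + 2) = 0`; cancelling `m + 1`
(no additive torsion) trades one power of `f` for two powers of `D f`. Starting from `f ^ n = 0`
and repeating `n` times yields `(D f) ^ (2 * n) = 0`.
-/

namespace Derivation

variable {A R : Type*} [CommSemiring A] [CommSemiring R] [Algebra A R] (D : Derivation A R R)

theorem apply_mul_pow_succ_eq_zero {x b : R} {j : ℕ} (h : x * b ^ j = 0) :
    D x * b ^ (j + 1) = 0 := by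
  have hsucc : x * b ^ (j + 1) = 0 := by rw [pow_succ, ← mul_assoc, h, zero_mul]
  have hD : D (x * b ^ (j + 1)) = (j + 1) • (x * b ^ j) * D b + D x * b ^ (j + 1) := by
    rw [leibniz, leibniz_pow, Nat.add_sub_cancel]
    simp only [smul_eq_mul, nsmul_eq_mul]
    ring
  rwa [hsucc, h, map_zero, smul_zero, zero_mul, zero_add, eq_comm] at hD

theorem pow_mul_apply_pow_add_two_eq_zero [IsAddTorsionFree R] {f : R} {m j : ℕ}
    (h : f ^ (m + 1) * D f ^ j = 0) : f ^ m * D f ^ (j + 2) = 0 := by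
  have hD := D.apply_mul_pow_succ_eq_zero h
  rwa [leibniz_pow, Nat.add_sub_cancel, smul_eq_mul, smul_mul_assoc, mul_assoc,
    ← pow_succ', nsmul_eq_zero_iff_right m.succ_ne_zero] at hD

theorem apply_pow_eq_zero_of_pow_mul_apply_pow_eq_zero [IsAddTorsionFree R] {f : R} {m j : ℕ}
    (h : f ^ m * D f ^ j = 0) : D f ^ (j + 2 * m) = 0 := by
  induction m generalizing j with
  | zero => simpa using h
  | succ m ih =>
    rw [show j + 2 * (m + 1) = j + 2 + 2 * m by ring]
    exact ih (D.pow_mul_apply_pow_add_two_eq_zero h)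

theorem isNilpotent_apply [IsAddTorsionFree R] {f : R} (hf : IsNilpotent f) :
    IsNilpotent (D f) := by
  obtain ⟨n, hn⟩ := hf
  have hD := D.apply_pow_eq_zero_of_pow_mul_apply_pow_eq_zero (j := 0) (by rw [hn, zero_mul])
  exact ⟨2 * n, by rwa [zero_add] at hD⟩

end Derivation

theorem derivation_of_nilpotent_isNilpotent_general {R : Type*} [CommRing R] [Algebra ℚ R]
    (ξ : Derivation ℚ R R) (f : R) (n : ℕ) (hf : f ^ n = 0) :
    IsNilpotent (ξ f) :=
  have := IsAddTorsionFree.of_module_rat R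
  ξ.isNilpotent_apply ⟨n, hf⟩

/-- In a commutative ℚ-algebra, the derivative of a nilpotent element under any
derivation is again nilpotent. -/
theorem derivation_of_nilpotent_isNilpotent {R : Type*} [CommRing R] [Algebra ℚ R]
    (ξ : Derivation ℚ R R) (f : R) (n : ℕ) (hn : 1 ≤ n) (hf : f ^ n = 0) :
    IsNilpotent (ξ f) :=
  derivation_of_nilpotent_isNilpotent_general ξ f n hf
end

section
/- Every U-equivariant polynomial map φ : 𝔲 → 𝔲 (for the adjoint action of the 3×3 unitriangular group U on its Lie algebra 𝔲, coordinatized by (x,y,z) with Ad(u)(x,y,z) = (x, −cx+y+az, z)) has the form φ(x,y,z) = q₁(x,z)·(x,y,z) + q₀(x,z)·(0,1,0) for some polynomials q₀, q₁ ∈ k[x,z]. -/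
/-!
Fix `x, z ≠ 0`. Moving along the `a`-orbit and along the `c`-orbit of `(x, 0, z)` both reach
every `(x, y, z)`, so the middle coordinate of `φ(x, y, z)` is affine in `y` with slope
`r(x,0,z)/z` and also with slope `p(x,0,z)/x`, while `p` and `r` do not depend on `y`. Hence
`p/x = r/z = q₁(x, z)` and `φ = q₁ • (x, y, z) + q₀ • (0, 1, 0)` on the dense set `xz ≠ 0`;
both sides are polynomial, so the identity holds everywhere over an infinite field.
-/

open MvPolynomial

namespace MvPolynomial

variable {R : Type*} [CommRing R]

theorem eq_of_eval_eq_of_forall_ne_zero [IsDomain R] [Infinite R] {σ : Type*}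
    {p q : MvPolynomial σ R} (h : ∀ x : σ → R, (∀ i, x i ≠ 0) → eval x p = eval x q) :
    p = q :=
  funext_set (fun _ ↦ {0}ᶜ) (fun _ ↦ (Set.finite_singleton 0).infinite_compl)
    fun x hx ↦ h x fun i ↦ hx i trivial

theorem eval_bind₁_fill_middle (p : MvPolynomial (Fin 3) R) (x c z : R) :
    eval ![x, z] (bind₁ ![X 0, C c, X 1] p) = eval ![x, c, z] p := by
  rw [eval, eval₂Hom_bind₁]
  congr 2
  funext i; fin_cases i <;> simp

theorem eval_rename_zero_two (q : MvPolynomial (Fin 2) R) (v : Fin 3 → R) :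
    eval v (rename ![0, 2] q) = eval ![v 0, v 2] q := by
  rw [eval_rename]
  congr 2
  funext i; fin_cases i <;> rfl

end MvPolynomial

def IsUnitriangularEquivariant {k : Type*} [Ring k] (φ : (Fin 3 → k) → (Fin 3 → k)) : Prop :=
  ∀ (a c : k) (v : Fin 3 → k),
    φ ![v 0, -c * v 0 + v 1 + a * v 2, v 2] = ![φ v 0, -c * φ v 0 + φ v 1 + a * φ v 2, φ v 2]

namespace IsUnitriangularEquivariant

variable {k : Type*} [Field k] {φ : (Fin 3 → k) → (Fin 3 → k)}

theorem apply_translate (hφ : IsUnitriangularEquivariant φ) (a c x z : k) :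
    φ ![x, -c * x + a * z, z] =
      ![φ ![x, 0, z] 0, -c * φ ![x, 0, z] 0 + φ ![x, 0, z] 1 + a * φ ![x, 0, z] 2,
        φ ![x, 0, z] 2] := by
  simpa using hφ a c ![x, 0, z]

theorem apply_eq_smul_add (hφ : IsUnitriangularEquivariant φ) {v : Fin 3 → k}
    (hx : v 0 ≠ 0) (hz : v 2 ≠ 0) :
    φ v = (φ ![v 0, 1, v 2] 1 - φ ![v 0, 0, v 2] 1) • v + φ ![v 0, 0, v 2] 1 • ![0, 1, 0] := by
  set u := φ ![v 0, 0, v 2]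
  have along_z (y : k) : φ ![v 0, y, v 2] = ![u 0, u 1 + y / v 2 * u 2, u 2] := by
    simpa [hz] using hφ.apply_translate (y / v 2) 0 (v 0) (v 2)
  have along_x (y : k) : φ ![v 0, y, v 2] = ![u 0, y / v 0 * u 0 + u 1, u 2] := by
    simpa [hx] using hφ.apply_translate 0 (-(y / v 0)) (v 0) (v 2)
  have hv : v = ![v 0, v 1, v 2] := by ext i; fin_cases i <;> rfl
  have slope : φ ![v 0, 1, v 2] 1 - u 1 = u 2 / v 2 := by
    simp only [along_z, Fin.isValue, Matrix.cons_val_one, Matrix.cons_val_zero]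
    ring
  have slopes_agree : u 0 / v 0 = u 2 / v 2 := by
    have h := congrFun ((along_x 1).symm.trans (along_z 1)) 1
    simp only [Fin.isValue, Matrix.cons_val_one, Matrix.cons_val_zero] at h
    field_simp at h ⊢
    linear_combination h
  rw [slope]
  conv_lhs => rw [hv, along_z]
  ext i; fin_cases i <;>
    simp only [Fin.zero_eta, Fin.mk_one, Fin.reduceFinMk, Matrix.cons_val, Pi.add_apply,
      Pi.smul_apply, smul_eq_mul, mul_zero, mul_one, add_zero]
  · rw [← slopes_agree]; field_simp
  · ring
  · field_simp

end IsUnitriangularEquivariant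

theorem covariants_of_unitriangular_general {k : Type*} [Field k] [IsAlgClosed k]
    (φ : (Fin 3 → k) → (Fin 3 → k))
    (hpoly : ∃ P : Fin 3 → MvPolynomial (Fin 3) k,
      ∀ (v : Fin 3 → k) (i : Fin 3), φ v i = MvPolynomial.eval v (P i))
    (hequiv : ∀ (a c : k) (v : Fin 3 → k),
      φ ![v 0, -c * v 0 + v 1 + a * v 2, v 2] =
        ![φ v 0, -c * φ v 0 + φ v 1 + a * φ v 2, φ v 2]) :
    ∃ q₀ q₁ : MvPolynomial (Fin 2) k, ∀ v : Fin 3 → k,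
      φ v = MvPolynomial.eval ![v 0, v 2] q₁ • v +
        MvPolynomial.eval ![v 0, v 2] q₀ • ![0, 1, 0] := by
  obtain ⟨P, hP⟩ := hpoly
  set q₀ : MvPolynomial (Fin 2) k := bind₁ ![X 0, C 0, X 1] (P 1)
  set q₁ : MvPolynomial (Fin 2) k := bind₁ ![X 0, C 1, X 1] (P 1) - q₀
  have generic (v : Fin 3 → k) (hx : v 0 ≠ 0) (hz : v 2 ≠ 0) :
      φ v = eval ![v 0, v 2] q₁ • v + eval ![v 0, v 2] q₀ • ![0, 1, 0] := by
    simp only [q₁, q₀, map_sub, eval_bind₁_fill_middle, ← hP]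
    exact IsUnitriangularEquivariant.apply_eq_smul_add hequiv hx hz
  refine ⟨q₀, q₁, fun v ↦ funext fun i ↦ ?_⟩
  have hpoly_eq : P i = rename ![0, 2] q₁ * X i + rename ![0, 2] q₀ * C (![0, 1, 0] i) :=
    eq_of_eval_eq_of_forall_ne_zero fun w hw ↦ by
      simp only [← hP, generic w (hw 0) (hw 2), Pi.add_apply, Pi.smul_apply, smul_eq_mul,
        map_add, map_mul, eval_X, eval_C, eval_rename_zero_two]
  simpa only [Pi.add_apply, Pi.smul_apply, smul_eq_mul, map_add, map_mul, eval_X, eval_C,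
    eval_rename_zero_two, ← hP] using congrArg (eval v) hpoly_eq

/-- Every `U`-equivariant polynomial map `φ : 𝔲 → 𝔲` for the adjoint action
`(x,y,z) ↦ (x, -cx + y + az, z)` has the form
`φ(x,y,z) = q₁(x,z)·(x,y,z) + q₀(x,z)·(0,1,0)`. -/
theorem covariants_of_unitriangular {k : Type*} [Field k] [CharZero k] [IsAlgClosed k]
    (φ : (Fin 3 → k) → (Fin 3 → k))
    (hpoly : ∃ P : Fin 3 → MvPolynomial (Fin 3) k,
      ∀ (v : Fin 3 → k) (i : Fin 3), φ v i = MvPolynomial.eval v (P i))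
    (hequiv : ∀ (a c : k) (v : Fin 3 → k),
      φ ![v 0, -c * v 0 + v 1 + a * v 2, v 2] =
        ![φ v 0, -c * φ v 0 + φ v 1 + a * φ v 2, φ v 2]) :
    ∃ q₀ q₁ : MvPolynomial (Fin 2) k, ∀ v : Fin 3 → k,
      φ v = MvPolynomial.eval ![v 0, v 2] q₁ • v +
        MvPolynomial.eval ![v 0, v 2] q₀ • ![0, 1, 0] :=
  covariants_of_unitriangular_general φ hpoly hequiv
end

section
/- For m ≥ 1 even, the alternating sum Σ_{i=1}^{m−1} (−1)^i C(m, i−1) C(m, i) C(m, i+1) is nonzero. -/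
/-!
Write `m = 2n` and `S n` for the sum. Zeilberger's algorithm produces the first-order recurrence
`3 (n+1) (2n+1) (3n+1) (3n+2) S n + n² (n+2) (2n+3) S (n+1) = 0`, which creative telescoping
with an explicit rational certificate proves. Both coefficients are positive for `n ≥ 1` and
`S 1 = -2`, so no `S n` vanishes; in fact `S n = 2 (-1)ⁿ (3n)! n² / (n!³ (n+1) (2n+1))`.
-/

open Finset

namespace TripleBinomial

section CastChoose

variable {K : Type*} [Field K] [CharZero K]

lemma cast_choose_succ_right (m k : ℕ) :
    (m.choose (k + 1) : K) = m.choose k * (m - k) / (k + 1) := by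
  rw [eq_div_iff k.cast_add_one_ne_zero]
  rcases le_or_gt k m with h | h
  · exact_mod_cast Nat.choose_succ_right_eq m k
  · simp [Nat.choose_eq_zero_of_lt h, Nat.choose_eq_zero_of_lt (h.trans k.lt_succ_self)]

lemma cast_choose_eq_succ_choose (m k : ℕ) :
    (m.choose k : K) = (m + 1).choose k * (m + 1 - k) / (m + 1) := by
  rw [eq_div_iff m.cast_add_one_ne_zero]
  rcases le_or_gt k (m + 1) with h | h
  · exact_mod_cast Nat.choose_mul_succ_eq m k
  · simp [Nat.choose_eq_zero_of_lt h, Nat.choose_eq_zero_of_lt (m.lt_succ_self.trans h)]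

lemma cast_succ_choose_succ (m k : ℕ) :
    ((m + 1).choose (k + 1) : K) = m.choose k * (m + 1) / (k + 1) := by
  rw [eq_div_iff k.cast_add_one_ne_zero]
  exact_mod_cast (Nat.add_one_mul_choose_eq m k).symm.trans (mul_comm _ _)

end CastChoose

def summand (m k : ℕ) : ℤ :=
  (-1) ^ (k + 1) * m.choose k * m.choose (k + 1) * m.choose (k + 2)

def altSum (m : ℕ) : ℤ :=
  ∑ k ∈ range (m - 1), summand m k

def recurrenceSummand (n k : ℕ) : ℤ :=
  3 * (n + 1) * (2 * n + 1) * (3 * n + 1) * (3 * n + 2) * summand (2 * n) k +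
    n ^ 2 * (n + 2) * (2 * n + 3) * summand (2 * n + 2) k

/-- Found by Zeilberger's algorithm. -/
def certificate (n j : ℕ) : ℤ :=
  (-1) ^ j * (n + 1) *
    (8 * n ^ 2 - 128 * n ^ 3 - 512 * n ^ 4 - 448 * n ^ 5
      + (-24 * n + 42 * n ^ 2 + 540 * n ^ 3 + 624 * n ^ 4) * j
      + (6 - 3 * n - 252 * n ^ 2 - 348 * n ^ 3) * j ^ 2
      + (60 * n + 90 * n ^ 2) * j ^ 3 - (6 + 9 * n) * j ^ 4) *
    (2 * n + 1).choose j * (2 * n + 1).choose (j + 1) * (2 * n + 1).choose (j + 2)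

lemma mul_recurrenceSummand_zero (n : ℕ) :
    2 * (2 * n + 1 : ℤ) ^ 2 * recurrenceSummand n 0 = certificate n 0 := by
  simp only [recurrenceSummand, summand, certificate, zero_add, Nat.choose_zero_right,
    Nat.choose_one_right]
  apply Int.cast_injective (α := ℚ)
  push_cast
  simp only [Nat.cast_choose_two]
  push_cast
  ring

lemma mul_recurrenceSummand_succ (n j : ℕ) :
    2 * (2 * n + 1 : ℤ) ^ 2 * recurrenceSummand n (j + 1) =
      certificate n (j + 1) - certificate n j := by
  have h0 (i : ℕ) : ((2 * n).choose i : ℚ) =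
      (2 * n + 1).choose i * (2 * n + 1 - i) / (2 * n + 1) := by
    simpa using cast_choose_eq_succ_choose (K := ℚ) (2 * n) i
  have h1 (i : ℕ) : ((2 * n + 1).choose (i + 1) : ℚ) =
      (2 * n + 1).choose i * (2 * n + 1 - i) / (i + 1) := by
    simpa using cast_choose_succ_right (K := ℚ) (2 * n + 1) i
  have h2 (i : ℕ) : ((2 * n + 2).choose (i + 1) : ℚ) =
      (2 * n + 1).choose i * (2 * n + 2) / (i + 1) := by
    simpa [add_assoc, one_add_one_eq_two] using cast_succ_choose_succ (K := ℚ) (2 * n + 1) i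
  apply Int.cast_injective (α := ℚ)
  simp only [recurrenceSummand, summand, certificate]
  push_cast
  simp only [h0, h2]
  simp only [h1]
  push_cast
  field_simp
  ring

lemma certificate_two_mul_add_two (n : ℕ) : certificate n (2 * n + 2) = 0 := by
  simp [certificate]

lemma summand_eq_zero {m k : ℕ} (h : m - 1 ≤ k) : summand m k = 0 := by
  simp [summand, Nat.choose_eq_zero_of_lt (show m < k + 2 by omega)]

lemma sum_range_summand_of_le {m N : ℕ} (h : m - 1 ≤ N) :
    ∑ k ∈ range N, summand m k = altSum m :=
  (sum_subset (range_subset_range.2 h) fun _ _ hk ↦ summand_eq_zero (by simpa using hk)).symm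

lemma altSum_recurrence (n : ℕ) :
    3 * (n + 1) * (2 * n + 1) * (3 * n + 1) * (3 * n + 2) * altSum (2 * n) +
      n ^ 2 * (n + 2) * (2 * n + 3) * altSum (2 * n + 2) = 0 := by
  refine mul_left_cancel₀ (show 2 * (2 * n + 1 : ℤ) ^ 2 ≠ 0 by positivity) ?_
  rw [← sum_range_summand_of_le (N := 2 * n + 3) (by omega),
    ← sum_range_summand_of_le (N := 2 * n + 3) (by omega), mul_zero]
  calc _ = ∑ k ∈ range (2 * n + 3), 2 * (2 * n + 1 : ℤ) ^ 2 * recurrenceSummand n k := by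
        simp only [recurrenceSummand, mul_add, mul_sum, sum_add_distrib, mul_assoc]
    _ = certificate n (2 * n + 2) := by
        rw [sum_range_succ', sum_congr rfl fun j _ ↦ mul_recurrenceSummand_succ n j,
          sum_range_sub, mul_recurrenceSummand_zero, sub_add_cancel]
    _ = 0 := certificate_two_mul_add_two n

lemma altSum_two_mul_ne_zero {n : ℕ} (hn : 1 ≤ n) : altSum (2 * n) ≠ 0 := by
  induction n, hn using Nat.le_induction with
  | base => decide
  | succ n _ ih =>
    intro h
    have hrec := altSum_recurrence n
    rw [← mul_add_one, h, mul_zero, add_zero] at hrec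
    exact ih ((mul_eq_zero.1 hrec).resolve_left (by positivity))

lemma sum_Icc_eq_altSum (m : ℕ) :
    ∑ i ∈ Icc 1 (m - 1),
        (-1 : ℤ) ^ i * (m.choose (i - 1) : ℤ) * (m.choose i : ℤ) * (m.choose (i + 1) : ℤ) =
      altSum m := by
  rw [← Ico_add_one_right_eq_Icc, sum_Ico_eq_sum_range, add_tsub_cancel_right, altSum]
  refine sum_congr rfl fun k _ ↦ ?_
  rw [summand, add_tsub_cancel_left, add_comm 1 k, add_assoc, one_add_one_eq_two]

end TripleBinomial

/-- For even `m ≥ 1`, the alternating sum `Σ_{i=1}^{m-1} (-1)^i C(m,i-1) C(m,i) C(m,i+1)`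
is nonzero (Konvalinka). -/
theorem konvalinka_alternating_sum_ne_zero (m : ℕ) (hm : 1 ≤ m) (hme : Even m) :
    (∑ i ∈ Finset.Icc 1 (m - 1),
        (-1 : ℤ) ^ i * (m.choose (i - 1) : ℤ) * (m.choose i : ℤ) * (m.choose (i + 1) : ℤ)) ≠
      0 := by
  obtain ⟨n, rfl⟩ := hme
  rw [TripleBinomial.sum_Icc_eq_altSum, ← two_mul]
  exact TripleBinomial.altSum_two_mul_ne_zero (by omega)
end

section
/- The combinatorial identity: for natural numbers m ≥ 1 and even r = 2s with 0 ≤ r < 2m, Σ_{i=r−m+1}^{m−1} (−1)^i C(r,i) (m−r+i)_{r−i} (m−i+2)_i (m−i)_i (m−r+i+2)_{r−i} = (−1)^s (2s)! (m−1)! (m+1)! (2m−s)! / (s! (m−s−1)! (m−s+1)! (2m−2s)!), where (x)_n = x(x+1)⋯(x+n−1) is the rising factorial. -/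
/-!
Writing the Pochhammer symbols as quotients of factorials and putting `i = s + k`, the summand
becomes `(-1)^s (2s)! (m-1)! (m+1)! / (2m-2s)!` times the Dixon summand
`(-1)^k C(a+b, a+k) C(b+c, b+k) C(c+a, c+k)` with `a = s`, `b = m-s-1`, `c = m-s+1`.
So the claim is Dixon's identity
`Σ_k (-1)^k C(a+b, a+k) C(b+c, b+k) C(c+a, c+k) = (a+b+c)! / (a! b! c!)`.

Dixon's identity is proved by induction on `a + b + c` (a WZ-style argument): the right side
satisfies the trinomial Pascal rule, and the left side satisfies it summand by summand up to
`G(k+1) - G(k)`, where `G(k) = -(a+k)(b+k)(c+k) · summand(k)`; this telescopes to zero over any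
symmetric window containing the support `|k| ≤ min a b c`.
-/

open Finset Nat

lemma sum_Icc_sub_int {M : Type*} [AddCommGroup M] (f : ℤ → M) {a b : ℤ} (h : a ≤ b + 1) :
    ∑ k ∈ Icc a b, (f (k + 1) - f k) = f (b + 1) - f a := by
  obtain ⟨n, rfl⟩ : ∃ n : ℕ, b = a + n - 1 := ⟨(b + 1 - a).toNat, by omega⟩
  induction n with
  | zero => simp
  | succ n ih =>
    rw [show a + (n + 1 : ℕ) - 1 = a + n - 1 + 1 by push_cast; ring,
      ← insert_Icc_right_eq_Icc_add_one (by omega), sum_insert (by simp), ih (by omega)]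
    abel

lemma cast_ascFactorial_succ (n k : ℕ) : ((n + 1).ascFactorial k : ℚ) = (n + k)! / n ! := by
  rw [eq_div_iff (by positivity), mul_comm]
  exact_mod_cast factorial_mul_ascFactorial n k

lemma sum_Icc_natCast_sub {M : Type*} [AddCommMonoid M] (f : ℤ → M) {a N : ℕ} (h : N ≤ a) :
    ∑ i ∈ Icc (a - N) (a + N), f ((i : ℤ) - a) = ∑ k ∈ Icc (-N : ℤ) N, f k := by
  apply sum_nbij' (fun i : ℕ ↦ (i : ℤ) - a) (fun k ↦ (k + a).toNat) <;> intro x hx <;>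
    simp only [mem_Icc] at hx ⊢ <;> omega

namespace Dixon

def intChoose (n : ℕ) : ℤ → ℕ
  | .ofNat k => n.choose k
  | .negSucc _ => 0

@[simp] lemma intChoose_natCast (n k : ℕ) : intChoose n k = n.choose k := rfl

@[simp] lemma intChoose_zero (n : ℕ) : intChoose n 0 = 1 := choose_zero_right n

lemma intChoose_of_neg {n : ℕ} {k : ℤ} (hk : k < 0) : intChoose n k = 0 := by
  cases k with
  | ofNat k => exact absurd hk (Int.natCast_nonneg k).not_gt
  | negSucc k => rfl

lemma intChoose_of_lt {n : ℕ} {k : ℤ} (hk : n < k) : intChoose n k = 0 := by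
  lift k to ℕ using by omega
  exact choose_eq_zero_of_lt (by omega)

lemma intCast_add_one_mul_intChoose_of_neg {n : ℕ} {k : ℤ} (hk : k < 0) :
    ((k : ℚ) + 1) * intChoose n (k + 1) = 0 := by
  rcases (by omega : k + 1 < 0 ∨ k = -1) with hk | rfl
  · simp [intChoose_of_neg hk]
  · simp

lemma add_one_mul_intChoose (n : ℕ) (k : ℤ) :
    ((k : ℚ) + 1) * intChoose (n + 1) (k + 1) = (n + 1) * intChoose n k := by
  rcases lt_or_ge k 0 with hk | hk
  · simp [intChoose_of_neg hk, intCast_add_one_mul_intChoose_of_neg hk]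
  lift k to ℕ using hk
  rw [← Nat.cast_succ, intChoose_natCast, intChoose_natCast]
  exact_mod_cast ((add_one_mul_choose_eq n k).trans (mul_comm _ _)).symm

lemma sub_mul_intChoose_succ (n : ℕ) (k : ℤ) :
    ((n : ℚ) + 1 - k) * intChoose (n + 1) k = (n + 1) * intChoose n k := by
  rcases lt_or_ge k 0 with hk | hk
  · simp [intChoose_of_neg hk]
  lift k to ℕ using hk
  rcases le_or_gt k (n + 1) with hkn | hkn
  · have h : ((n.choose k * (n + 1) : ℕ) : ℚ) = ((n + 1).choose k * (n + 1 - k) : ℕ) :=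
      congrArg _ (choose_mul_succ_eq n k)
    push_cast [Nat.cast_sub hkn] at h
    simp only [intChoose_natCast]
    linear_combination -h
  · simp [choose_eq_zero_of_lt hkn, choose_eq_zero_of_lt (by omega : n < k)]

lemma add_one_mul_intChoose_add_one (n : ℕ) (k : ℤ) :
    ((k : ℚ) + 1) * intChoose n (k + 1) = (n - k) * intChoose n k := by
  rcases lt_or_ge k 0 with hk | hk
  · simp [intChoose_of_neg hk, intCast_add_one_mul_intChoose_of_neg hk]
  lift k to ℕ using hk
  rw [← Nat.cast_succ, intChoose_natCast, intChoose_natCast]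
  rcases le_or_gt k n with hkn | hkn
  · have h : ((n.choose (k + 1) * (k + 1) : ℕ) : ℚ) = (n.choose k * (n - k) : ℕ) :=
      congrArg _ (choose_succ_right_eq n k)
    push_cast [Nat.cast_sub hkn] at h
    linear_combination h
  · simp [choose_eq_zero_of_lt hkn, choose_eq_zero_of_lt (by omega : n < k + 1)]

def dixonTerm (a b c : ℕ) (k : ℤ) : ℚ :=
  (-1) ^ k * intChoose (a + b) (a + k) * intChoose (b + c) (b + k) * intChoose (c + a) (c + k)

lemma dixonTerm_rotate (a b c : ℕ) (k : ℤ) : dixonTerm b c a k = dixonTerm a b c k := by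
  unfold dixonTerm; ring

lemma intChoose_add_eq_zero {p q : ℕ} {k : ℤ} (h : k < -p ∨ q < k) :
    intChoose (p + q) (p + k) = 0 := by
  rcases h with h | h
  · exact intChoose_of_neg (by omega)
  · exact intChoose_of_lt (by push_cast; omega)

lemma dixonTerm_eq_zero {a b c : ℕ} {k : ℤ} (h : min a (min b c) < |k|) :
    dixonTerm a b c k = 0 := by
  rw [lt_abs] at h
  unfold dixonTerm
  by_cases hab : k < -a ∨ b < k
  · simp [intChoose_add_eq_zero hab]
  by_cases hbc : k < -b ∨ c < k
  · simp [intChoose_add_eq_zero hbc]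
  simp [intChoose_add_eq_zero (by omega : k < -c ∨ a < k)]

lemma dixonTerm_succ_left (a b c : ℕ) (k : ℤ) :
    ((a : ℚ) + b + 1) * (c + a + 1) * dixonTerm a b c k =
      (a + 1 + k) * (a + 1 - k) * dixonTerm (a + 1) b c k := by
  have h₁ := add_one_mul_intChoose (a + b) (a + k)
  have h₂ := sub_mul_intChoose_succ (c + a) (c + k)
  simp only [dixonTerm, Nat.add_right_comm a 1 b, ← Nat.add_assoc c a 1]
  push_cast at h₁ h₂ ⊢
  rw [show (a : ℤ) + k + 1 = a + 1 + k by ring] at h₁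
  linear_combination (-((-1 : ℚ) ^ k * intChoose (b + c) (b + k))) *
    ((a + 1 - k) * intChoose (c + a + 1) (c + k) * h₁ +
      (a + b + 1) * intChoose (a + b) (a + k) * h₂)

lemma dixonTerm_succ_index (a b c : ℕ) (k : ℤ) :
    ((a : ℚ) + k + 1) * (b + k + 1) * (c + k + 1) * dixonTerm a b c (k + 1) =
      -((a - k) * (b - k) * (c - k) * dixonTerm a b c k) := by
  have h₁ := add_one_mul_intChoose_add_one (a + b) (a + k)
  have h₂ := add_one_mul_intChoose_add_one (b + c) (b + k)
  have h₃ := add_one_mul_intChoose_add_one (c + a) (c + k)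
  simp only [dixonTerm, ← add_assoc, zpow_add_one₀ (by norm_num : (-1 : ℚ) ≠ 0)]
  push_cast at h₁ h₂ h₃ ⊢
  linear_combination (-(-1 : ℚ) ^ k) *
    ((b + k + 1) * (c + k + 1) * intChoose (b + c) (b + k + 1) * intChoose (c + a) (c + k + 1) *
        h₁
      + (b - k) * (c + k + 1) * intChoose (a + b) (a + k) * intChoose (c + a) (c + k + 1) * h₂
      + (b - k) * (c - k) * intChoose (a + b) (a + k) * intChoose (b + c) (b + k) * h₃)

def dixonCert (a b c : ℕ) (k : ℤ) : ℚ := -((a + k) * (b + k) * (c + k) * dixonTerm a b c k)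

lemma dixonCert_succ_sub (a b c : ℕ) (k : ℤ) :
    dixonCert a b c (k + 1) - dixonCert a b c k =
      2 * ((a + b + c) * k ^ 2 + a * b * c) * dixonTerm a b c k := by
  have h := dixonTerm_succ_index a b c k
  unfold dixonCert
  push_cast
  linear_combination -h

lemma dixonTerm_pascal (a b c : ℕ) (k : ℤ) :
    ((a : ℚ) + b + 2) * (b + c + 2) * (c + a + 2) *
        (dixonTerm (a + 1) (b + 1) (c + 1) k - dixonTerm a (b + 1) (c + 1) k -
          dixonTerm (a + 1) b (c + 1) k - dixonTerm (a + 1) (b + 1) c k) =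
      dixonCert (a + 1) (b + 1) (c + 1) (k + 1) - dixonCert (a + 1) (b + 1) (c + 1) k := by
  have ha := dixonTerm_succ_left a (b + 1) (c + 1) k
  have hb := dixonTerm_succ_left b (c + 1) (a + 1) k
  have hc := dixonTerm_succ_left c (a + 1) (b + 1) k
  rw [dixonTerm_rotate (a + 1) b, dixonTerm_rotate (a + 1) (b + 1)] at hb
  rw [dixonTerm_rotate (b + 1) c, dixonTerm_rotate (a + 1) (b + 1) c,
    dixonTerm_rotate (b + 1) (c + 1), dixonTerm_rotate (a + 1) (b + 1) (c + 1)] at hc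
  rw [dixonCert_succ_sub]
  push_cast at ha hb hc ⊢
  linear_combination (-((b : ℚ) + c + 2)) * ha - (c + a + 2) * hb - (a + b + 2) * hc

def trinomial (a b c : ℕ) : ℚ := (a + b + c)! / (a ! * b ! * c !)

lemma trinomial_rotate (a b c : ℕ) : trinomial b c a = trinomial a b c := by
  unfold trinomial; rw [show b + c + a = a + b + c by ring]; ring

lemma trinomial_succ_succ_succ (a b c : ℕ) :
    trinomial (a + 1) (b + 1) (c + 1) =
      trinomial a (b + 1) (c + 1) + trinomial (a + 1) b (c + 1) + trinomial (a + 1) (b + 1) c := by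
  unfold trinomial
  rw [show a + 1 + (b + 1) + (c + 1) = a + b + c + 2 + 1 by ring,
    show a + (b + 1) + (c + 1) = a + b + c + 1 + 1 by ring,
    show a + 1 + b + (c + 1) = a + b + c + 1 + 1 by ring,
    show a + 1 + (b + 1) + c = a + b + c + 1 + 1 by ring]
  simp only [factorial_succ]
  push_cast
  field_simp
  ring

lemma sum_dixonTerm_zero_left (b c N : ℕ) :
    ∑ k ∈ Icc (-N : ℤ) N, dixonTerm 0 b c k = trinomial 0 b c := by
  rw [sum_eq_single_of_mem 0 (by simp) fun k _ hk ↦ dixonTerm_eq_zero (by simpa using hk)]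
  simp [dixonTerm, trinomial, cast_choose ℚ (Nat.le_add_right b c)]

lemma sum_dixonTerm_rotate (a b c N : ℕ) :
    ∑ k ∈ Icc (-N : ℤ) N, dixonTerm b c a k =
      ∑ k ∈ Icc (-N : ℤ) N, dixonTerm a b c k := by
  simp only [dixonTerm_rotate]

lemma sum_dixonCert_sub_eq_zero {a b c N : ℕ} (hN : min a (min b c) ≤ N) :
    ∑ k ∈ Icc (-N : ℤ) N, (dixonCert a b c (k + 1) - dixonCert a b c k) = 0 := by
  rw [sum_Icc_sub_int _ (by omega), sub_eq_zero, dixonCert, dixonCert,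
    dixonTerm_eq_zero (by rw [abs_of_pos (by omega)]; omega)]
  -- At `k = -N` the summand vanishes unless `N = min a b c`, and then one of `a + k`, `b + k`,
  -- `c + k` does.
  rcases hN.lt_or_eq with hN | hN
  · rw [dixonTerm_eq_zero (by rw [abs_neg, Nat.abs_cast]; exact_mod_cast hN)]; simp
  · rcases (by omega : a = N ∨ b = N ∨ c = N) with rfl | rfl | rfl <;> simp

theorem sum_dixonTerm {N : ℕ} : ∀ a b c : ℕ, min a (min b c) ≤ N →
    ∑ k ∈ Icc (-N : ℤ) N, dixonTerm a b c k = trinomial a b c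
  | 0, b, c, _ => sum_dixonTerm_zero_left b c N
  | a + 1, 0, c, _ => by
    rw [← sum_dixonTerm_rotate, ← trinomial_rotate, sum_dixonTerm_zero_left]
  | a + 1, b + 1, 0, _ => by
    rw [← sum_dixonTerm_rotate, ← sum_dixonTerm_rotate, ← trinomial_rotate,
      ← trinomial_rotate, sum_dixonTerm_zero_left]
  | a + 1, b + 1, c + 1, hN => by
    have hpascal := sum_congr rfl fun k (_ : k ∈ Icc (-N : ℤ) N) ↦ dixonTerm_pascal a b c k
    rw [← mul_sum, sum_dixonCert_sub_eq_zero hN] at hpascal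
    have h := (mul_eq_zero.mp hpascal).resolve_left (by positivity)
    simp only [sum_sub_distrib] at h
    rw [trinomial_succ_succ_succ, ← sum_dixonTerm (N := N) a (b + 1) (c + 1) (by omega),
      ← sum_dixonTerm (N := N) (a + 1) b (c + 1) (by omega),
      ← sum_dixonTerm (N := N) (a + 1) (b + 1) c (by omega)]
    linear_combination h

end Dixon

namespace Transvectant

open Dixon

lemma choose_mul_ascFactorial_eq_factorial_mul_choose {p q u v : ℕ} (h : u + q = p + v) :
    ((p + q).choose p : ℚ) * (u + 1).ascFactorial q * (v + 3).ascFactorial p *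
        (v + 1).ascFactorial p * (u + 3).ascFactorial q =
      (p + q)! * (p + v)! * (p + v + 2)! / (u + v + 2)! *
        ((p + v).choose p * (u + v + 2).choose u * (u + q + 2).choose (u + 2)) := by
  rw [cast_choose ℚ (by omega : p ≤ p + q), cast_choose ℚ (by omega : p ≤ p + v),
    cast_choose ℚ (by omega : u ≤ u + v + 2), cast_choose ℚ (by omega : u + 2 ≤ u + q + 2),
    show p + q - p = q by omega, show p + v - p = v by omega, show u + v + 2 - u = v + 2 by omega,
    show u + q + 2 - (u + 2) = q by omega, show u + 3 = u + 2 + 1 from rfl,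
    show v + 3 = v + 2 + 1 from rfl, cast_ascFactorial_succ, cast_ascFactorial_succ,
    cast_ascFactorial_succ, cast_ascFactorial_succ, h, show u + 2 + q = p + v + 2 by omega,
    show v + 2 + p = p + v + 2 by omega, Nat.add_comm v p]
  field_simp

lemma transvectant_summand_eq_dixonTerm {m s i : ℕ} (hs : s < m)
    (hi : i ∈ Icc (s - min s (m - s - 1)) (s + min s (m - s - 1))) :
    (-1 : ℚ) ^ i * ((2 * s).choose i : ℚ) * ((m + i - 2 * s).ascFactorial (2 * s - i) : ℚ) *
        ((m - i + 2).ascFactorial i : ℚ) * ((m - i).ascFactorial i : ℚ) *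
        ((m + i + 2 - 2 * s).ascFactorial (2 * s - i) : ℚ) =
      (-1) ^ s * (2 * s)! * (m - 1)! * (m + 1)! / (2 * m - 2 * s)! *
        dixonTerm s (m - s - 1) (m - s + 1) (i - s) := by
  rw [mem_Icc] at hi
  obtain ⟨q, u, v, hq, hu, hv⟩ :
      ∃ q u v : ℕ, 2 * s = i + q ∧ m + i = 2 * s + u + 1 ∧ m = i + v + 1 :=
    ⟨2 * s - i, m + i - 2 * s - 1, m - 1 - i, by omega, by omega, by omega⟩
  have hsign : (-1 : ℚ) ^ i = (-1) ^ s * (-1) ^ ((i : ℤ) - s) := by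
    rw [← zpow_natCast, ← zpow_natCast, ← zpow_add₀ (by norm_num), add_sub_cancel]
  have hterm : dixonTerm s (m - s - 1) (m - s + 1) (i - s) = (-1) ^ ((i : ℤ) - s) *
      (((i + v).choose i : ℚ) * (u + v + 2).choose u * (u + q + 2).choose (u + 2)) := by
    rw [dixonTerm, show s + (m - s - 1) = i + v by omega,
      show m - s - 1 + (m - s + 1) = u + v + 2 by omega, show m - s + 1 + s = u + q + 2 by omega,
      show (s : ℤ) + (i - s) = (i : ℕ) by omega,
      show ((m - s - 1 : ℕ) : ℤ) + (i - s) = (u : ℕ) by omega,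
      show ((m - s + 1 : ℕ) : ℤ) + (i - s) = (u + 2 : ℕ) by omega]
    simp only [intChoose_natCast]
    ring
  rw [hterm, hsign, show m + i - 2 * s = u + 1 by omega, show 2 * s - i = q by omega,
    show m - i + 2 = v + 3 by omega, show m - i = v + 1 by omega,
    show m + i + 2 - 2 * s = u + 3 by omega, show 2 * m - 2 * s = u + v + 2 by omega, hq,
    show m - 1 = i + v by omega, show m + 1 = i + v + 2 by omega]
  linear_combination (-1 : ℚ) ^ s * (-1) ^ ((i : ℤ) - s) *
    choose_mul_ascFactorial_eq_factorial_mul_choose (show u + q = i + v by omega)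

end Transvectant

open Dixon Transvectant in
theorem transvectant_coefficient_formula_general (m s r : ℕ) (hr : r = 2 * s)
    (hrd : r < 2 * m) :
    (∑ i ∈ Finset.Icc (r + 1 - m) (min r (m - 1)),
        (-1 : ℚ) ^ i * (r.choose i : ℚ) * ((m + i - r).ascFactorial (r - i) : ℚ) *
          ((m - i + 2).ascFactorial i : ℚ) * ((m - i).ascFactorial i : ℚ) *
          ((m + i + 2 - r).ascFactorial (r - i) : ℚ)) =
      (-1 : ℚ) ^ s * ((2 * s).factorial : ℚ) * ((m - 1).factorial : ℚ) *
          ((m + 1).factorial : ℚ) * ((2 * m - s).factorial : ℚ) /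
        ((s.factorial : ℚ) * ((m - s - 1).factorial : ℚ) * ((m - s + 1).factorial : ℚ) *
          ((2 * m - 2 * s).factorial : ℚ)) := by
  subst hr
  have hs : s < m := by omega
  rw [show 2 * s + 1 - m = s - min s (m - s - 1) by omega,
    show min (2 * s) (m - 1) = s + min s (m - s - 1) by omega,
    sum_congr rfl fun i hi ↦ transvectant_summand_eq_dixonTerm hs hi, ← mul_sum,
    sum_Icc_natCast_sub (dixonTerm s (m - s - 1) (m - s + 1)) (min_le_left _ _),
    sum_dixonTerm s _ _ (by omega), trinomial,
    show s + (m - s - 1) + (m - s + 1) = 2 * m - s by omega]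
  field_simp

/-- Evaluation of the transvectant coefficient `c_{m,2s}`: for `m ≥ 1` and even
`r = 2s < 2m`,
`Σ_i (-1)^i C(r,i) (m-r+i)_{r-i} (m-i+2)_i (m-i)_i (m-r+i+2)_{r-i}
  = (-1)^s (2s)! (m-1)! (m+1)! (2m-s)! / (s! (m-s-1)! (m-s+1)! (2m-2s)!)`,
where `(x)_n` is the rising factorial and the sum is over
`max(0, r-m+1) ≤ i ≤ min(r, m-1)`. -/
theorem transvectant_coefficient_formula (m s r : ℕ) (hm : 1 ≤ m) (hr : r = 2 * s)
    (hrd : r < 2 * m) :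
    (∑ i ∈ Finset.Icc (r + 1 - m) (min r (m - 1)),
        (-1 : ℚ) ^ i * (r.choose i : ℚ) * ((m + i - r).ascFactorial (r - i) : ℚ) *
          ((m - i + 2).ascFactorial i : ℚ) * ((m - i).ascFactorial i : ℚ) *
          ((m + i + 2 - r).ascFactorial (r - i) : ℚ)) =
      (-1 : ℚ) ^ s * ((2 * s).factorial : ℚ) * ((m - 1).factorial : ℚ) *
          ((m + 1).factorial : ℚ) * ((2 * m - s).factorial : ℚ) /
        ((s.factorial : ℚ) * ((m - s - 1).factorial : ℚ) * ((m - s + 1).factorial : ℚ) *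
          ((2 * m - 2 * s).factorial : ℚ)) :=
  transvectant_coefficient_formula_general m s r hr hrd
end
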